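/- arXiv:2105.09905 — 11 statements merged into one kernel-verified Lean document; each statement's English description precedes it below -/
import Mathlib

section
/- (Generalized Bolzano–Weierstrass theorem / Zarankiewicz) Let X be a separable metrizable topological space. Then every sequence (Kₙ)_{n∈ℕ} of subsets of X has a subsequence that converges in the sense of Kuratowski, i.e., there is an infinite set A ⊆ ℕ such that Li (Kₙ)_{n∈A} = Ls (Kₙ)_{n∈A}. -/
/-!
Fix a countable basis `b` of `X`. Recording, for each `n`, which basic sets meet `K n` gives a
sequence in the compact metrizable space `b → Bool`, so some subsequence `K ∘ φ` converges
there: every basic set meets `K (φ k)` either for all large `k` or for no large `k`. Along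
`A = range φ` this dichotomy turns every point of the upper limit into a point of the lower limit.
-/

open Set Topology TopologicalSpace

/-- Lower closed limit (Kuratowski) of the subsequence of `K` indexed by the
infinite set `A ⊆ ℕ`, with respect to the topology `t`: points all of whose
open neighborhoods meet `K n` for all but finitely many `n ∈ A`. -/
def kurLi {X : Type*} (t : TopologicalSpace X) (K : ℕ → Set X) (A : Set ℕ) : Set X :=
  {x | ∀ U : Set X, IsOpen[t] U → x ∈ U → {n ∈ A | U ∩ K n = ∅}.Finite}

/-- Upper closed limit (Kuratowski): points all of whose open neighborhoods
meet `K n` for infinitely many `n ∈ A`. -/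
def kurLs {X : Type*} (t : TopologicalSpace X) (K : ℕ → Set X) (A : Set ℕ) : Set X :=
  {x | ∀ U : Set X, IsOpen[t] U → x ∈ U → {n ∈ A | (U ∩ K n).Nonempty}.Infinite}

/-- A family of subsets of `ℕ` is splitting if every infinite `A ⊆ ℕ` is split
by some member of the family. -/
def IsSplittingFamily (S : Set (Set ℕ)) : Prop :=
  ∀ A : Set ℕ, A.Infinite → ∃ s ∈ S, (A ∩ s).Infinite ∧ (A \ s).Infinite

open Filter Function

theorem exists_strictMono_forall_eventually_eq {ι β : Type*} [Countable ι] [Finite β]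
    (c : ℕ → ι → β) : ∃ l : ι → β, ∃ φ : ℕ → ℕ, StrictMono φ ∧
      ∀ i, ∀ᶠ k in atTop, c (φ k) i = l i := by
  let _ : TopologicalSpace β := ⊥
  have : DiscreteTopology β := ⟨rfl⟩
  obtain ⟨l, φ, hφ, hlim⟩ := SeqCompactSpace.tendsto_subseq c
  refine ⟨l, φ, hφ, fun i => ?_⟩
  have hlim_i := tendsto_pi_nhds.mp hlim i
  rwa [nhds_discrete, tendsto_pure] at hlim_i

theorem finite_sep_range_iff {α : Type*} {φ : ℕ → α} (hφ : Injective φ) (p : α → Prop) :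
    {a ∈ range φ | p a}.Finite ↔ ∀ᶠ k in atTop, ¬ p (φ k) := by
  have himage : {a ∈ range φ | p a} = φ '' {k | p (φ k)} := by
    ext a
    constructor
    · rintro ⟨⟨k, rfl⟩, hk⟩
      exact ⟨k, hk, rfl⟩
    · rintro ⟨k, hk, rfl⟩
      exact ⟨mem_range_self k, hk⟩
  rw [himage, finite_image_iff hφ.injOn, ← Nat.cofinite_eq_atTop, eventually_cofinite]
  simp only [not_not]

section KuratowskiLimits

variable {X : Type*} [t : TopologicalSpace X] {K : ℕ → Set X} {φ : ℕ → ℕ}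

theorem mem_kurLi_range_iff (hφ : Injective φ) {x : X} :
    x ∈ kurLi t K (range φ) ↔
      ∀ U, IsOpen U → x ∈ U → ∀ᶠ k in atTop, (U ∩ K (φ k)).Nonempty := by
  simp only [kurLi, mem_ofPred_eq, finite_sep_range_iff hφ, nonempty_iff_ne_empty]

theorem mem_kurLs_range_iff (hφ : Injective φ) {x : X} :
    x ∈ kurLs t K (range φ) ↔
      ∀ U, IsOpen U → x ∈ U → ∃ᶠ k in atTop, (U ∩ K (φ k)).Nonempty := by
  simp only [kurLs, mem_ofPred_eq, Set.Infinite, finite_sep_range_iff hφ, not_eventually,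
    not_not]

theorem kurLi_range_eq_kurLs_of_isTopologicalBasis {b : Set (Set X)}
    (hb : IsTopologicalBasis b) (hφ : Injective φ)
    (hdich : ∀ v ∈ b, (∀ᶠ k in atTop, (v ∩ K (φ k)).Nonempty) ∨
      ∀ᶠ k in atTop, v ∩ K (φ k) = ∅) :
    kurLi t K (range φ) = kurLs t K (range φ) := by
  refine Subset.antisymm (fun x hx => ?_) (fun x hx => ?_)
  · rw [mem_kurLi_range_iff hφ] at hx
    rw [mem_kurLs_range_iff hφ]
    exact fun U hU hxU => (hx U hU hxU).frequently
  · rw [mem_kurLs_range_iff hφ] at hx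
    rw [mem_kurLi_range_iff hφ]
    intro U hU hxU
    obtain ⟨v, hv, hxv, hvU⟩ := hb.exists_subset_of_mem_open hxU hU
    have hmeets := hx v (hb.isOpen hv) hxv
    refine (hdich v hv).elim (fun hv_eventually => ?_) (fun hv_empty => ?_)
    · exact hv_eventually.mono fun k hk => hk.mono (inter_subset_inter_left _ hvU)
    · obtain ⟨k, hk_ne, hk_empty⟩ := (hmeets.and_eventually hv_empty).exists
      exact absurd hk_empty hk_ne.ne_empty

end KuratowskiLimits

/-- Generalized Bolzano–Weierstrass theorem (Zarankiewicz): every sequence of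
subsets of a separable metrizable space has a Kuratowski-convergent subsequence. -/
theorem stmt0 {X : Type*} [t : TopologicalSpace X] [SeparableSpace X]
    [MetrizableSpace X] (K : ℕ → Set X) :
    ∃ A : Set ℕ, A.Infinite ∧ kurLi t K A = kurLs t K A := by
  let _ : MetricSpace X := metrizableSpaceMetric X
  have : SecondCountableTopology X := UniformSpace.secondCountable_of_separable X
  obtain ⟨b, hbc, -, hb⟩ := exists_countable_basis X
  have : Countable b := hbc.to_subtype
  classical
  obtain ⟨l, φ, hφ, hl⟩ := exists_strictMono_forall_eventually_eq
    fun n (v : b) => decide ((v : Set X) ∩ K n).Nonempty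
  refine ⟨range φ, infinite_range_of_injective hφ.injective,
    kurLi_range_eq_kurLs_of_isTopologicalBasis hb hφ.injective fun v hv => ?_⟩
  cases hlv : l ⟨v, hv⟩
  · exact .inr <| (hl ⟨v, hv⟩).mono fun k hk => by
      simpa [hlv, not_nonempty_iff_eq_empty] using hk
  · exact .inl <| (hl ⟨v, hv⟩).mono fun k hk => by simpa [hlv] using hk
end

section
/- (Sierpiński) Assume the continuum hypothesis, 2^{ℵ₀} = ℵ₁. Let X be a metrizable topological space such that every sequence (Kₙ)_{n∈ℕ} of subsets of X has a subsequence converging in the sense of Kuratowski. Then X is separable. -/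
open Set Topology TopologicalSpace

/-!
A non-separable metric space contains, for some `ε > 0`, an uncountable `ε`-separated set `E`:
otherwise maximal `ε`-separated sets would be countable `ε`-nets for every `ε`, and their union
would be dense. Under CH, `E` has at least `𝔠` points, so distinct points `x s ∈ E` can be indexed
by the sets `s ⊆ ℕ`. Put `K n = {x s | n ∈ s}`. For an infinite `A`, pick `s` splitting `A` into
two infinite parts: `x s ∈ K n` for every `n ∈ A ∩ s`, but a neighbourhood of `x s` meeting `E`
only in `x s` misses `K n` for every `n ∈ A \ s`. Hence `x s ∈ Ls \ Li` along every `A`.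
-/

open scoped ENNReal NNReal

universe v

namespace Metric

variable {X : Type*} [PseudoEMetricSpace X]

theorem exists_maximal_isSeparated (ε : ℝ≥0∞) (s : Set X) :
    ∃ N, Maximal (fun N ↦ N ⊆ s ∧ IsSeparated ε N) N :=
  zorn_subset _ fun c hcs hc ↦
    ⟨⋃₀ c, ⟨sUnion_subset fun _ hN ↦ (hcs hN).1,
      (pairwise_sUnion hc.directedOn).2 fun _ hN ↦ (hcs hN).2⟩,
      fun _ ↦ subset_sUnion_of_mem⟩

theorem IsSeparated.eball_inter_subset {ε : ℝ≥0∞} {s : Set X} (hs : IsSeparated ε s) {x : X}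
    (hx : x ∈ s) : eball x ε ∩ s ⊆ {x} := by
  rintro y ⟨hyx, hy⟩
  by_contra hne
  exact (hs hy hx hne).not_gt (mem_eball.1 hyx)

theorem separableSpace_of_forall_isSeparated_countable
    (h : ∀ ε : ℝ≥0∞, 0 < ε → ∀ s : Set X, IsSeparated ε s → s.Countable) :
    SeparableSpace X := by
  obtain ⟨t, -, htc, ht⟩ := EMetric.subset_countable_closure_of_almost_dense_set (univ : Set X)
    fun ε hε ↦ by
      obtain ⟨r, hr, hrε⟩ := ENNReal.lt_iff_exists_nnreal_btwn.1 hε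
      obtain ⟨N, hN⟩ := exists_maximal_isSeparated (r : ℝ≥0∞) (univ : Set X)
      refine ⟨N, h r hr N hN.1.2, ?_⟩
      exact (isCover_iff_subset_iUnion_closedEBall.1 (IsCover.of_maximal_isSeparated hN)).trans
        (iUnion₂_mono fun x _ ↦ closedEBall_subset_closedEBall hrε.le)
  exact ⟨⟨t, htc, fun x ↦ ht (mem_univ x)⟩⟩

end Metric

theorem isSplittingFamily_univ : IsSplittingFamily univ := by
  intro A hA
  obtain ⟨e, he, heA⟩ : ∃ e : ℕ → ℕ, e.Injective ∧ ∀ j, e j ∈ A :=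
    ⟨_, Subtype.val_injective.comp (hA.natEmbedding A).injective, fun j ↦ (hA.natEmbedding A j).2⟩
  refine ⟨range fun j ↦ e (2 * j), mem_univ _, ?_, ?_⟩
  · rw [inter_eq_right.2 (range_subset_iff.2 fun j ↦ heA _)]
    exact infinite_range_of_injective fun i j h ↦ by have := he h; omega
  · refine Infinite.mono ?_ <|
      infinite_range_of_injective (f := fun j ↦ e (2 * j + 1)) fun i j h ↦ by have := he h; omega
    rintro _ ⟨j, rfl⟩
    refine ⟨heA (2 * j + 1), ?_⟩
    rintro ⟨i, hij⟩
    have := he hij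
    omega

theorem exists_forall_kurLi_ne_kurLs {X : Type*} [t : TopologicalSpace X] {S : Set (Set ℕ)}
    (hS : IsSplittingFamily S) {E : Set X} (hE : ∀ x ∈ E, ∃ U, IsOpen U ∧ x ∈ U ∧ U ∩ E ⊆ {x})
    {f : Set ℕ → X} (hfE : MapsTo f S E) (hf : InjOn f S) :
    ∃ K : ℕ → Set X, ∀ A : Set ℕ, A.Infinite → kurLi t K A ≠ kurLs t K A := by
  let K : ℕ → Set X := fun n ↦ f '' {s ∈ S | n ∈ s}
  refine ⟨K, fun A hA hLiLs ↦ ?_⟩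
  obtain ⟨s, hs, hAs, hAs'⟩ := hS A hA
  obtain ⟨U, hU, hsU, hUE⟩ := hE (f s) (hfE hs)
  have hLs : f s ∈ kurLs t K A := fun V _ hsV ↦
    Infinite.mono (s := A ∩ s)
      (fun n ⟨hnA, hns⟩ ↦ ⟨hnA, f s, hsV, mem_image_of_mem f ⟨hs, hns⟩⟩) hAs
  have hLi : f s ∉ kurLi t K A := fun h ↦ hAs' <| (h U hU hsU).subset fun n ⟨hnA, hns⟩ ↦ by
    refine ⟨hnA, eq_empty_iff_forall_notMem.2 ?_⟩
    rintro _ ⟨hU', s', ⟨hs', hns'⟩, rfl⟩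
    exact hns (hf hs' hs (hUE ⟨hU', hfE hs'⟩) ▸ hns')
  exact hLi (hLiLs ▸ hLs)

theorem Cardinal.nonempty_embedding_setNat_of_not_countable {X : Type*}
    (hCH : Cardinal.continuum.{v} = Cardinal.aleph 1) {s : Set X} (hs : ¬ s.Countable) :
    Nonempty (Set ℕ ↪ s) := by
  rw [← lift_mk_le.{v}, mk_set_nat, lift_continuum, ← lift_continuum.{_, v}, hCH,
    lift_aleph, Ordinal.lift_one, aleph_one_le_iff, aleph0_lt_lift, ← not_le,
    le_aleph0_iff_set_countable]
  exact hs

/-- Sierpiński: under CH, a metrizable space in which every sequence of sets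
has a Kuratowski-convergent subsequence is separable. -/
theorem stmt1 (hCH : Cardinal.continuum = Cardinal.aleph 1)
    {X : Type*} [t : TopologicalSpace X] [MetrizableSpace X]
    (hGBW : ∀ K : ℕ → Set X, ∃ A : Set ℕ, A.Infinite ∧ kurLi t K A = kurLs t K A) :
    SeparableSpace X := by
  let := pseudoMetrizableSpacePseudoMetric X
  refine Metric.separableSpace_of_forall_isSeparated_countable fun ε hε E hE ↦ ?_
  by_contra hE_unc
  obtain ⟨f⟩ := Cardinal.nonempty_embedding_setNat_of_not_countable hCH hE_unc
  obtain ⟨K, hK⟩ := exists_forall_kurLi_ne_kurLs isSplittingFamily_univ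
    (fun x hx ↦ ⟨_, Metric.isOpen_eball, Metric.mem_eball_self hε, hE.eball_inter_subset hx⟩)
    (fun s _ ↦ (f s).2) (Subtype.val_injective.comp f.injective).injOn
  obtain ⟨A, hA, hLiLs⟩ := hGBW K
  exact hK A hA hLiLs
end

section
/- (Booth) Let X be a topological space admitting a base 𝓑 for its topology such that no family of subsets of ℕ of cardinality at most |𝓑| is a splitting family (i.e., |𝓑| is strictly less than the splitting number 𝔰). Then every sequence (Kₙ)_{n∈ℕ} of subsets of X has a subsequence that converges in the sense of Kuratowski. -/
open Set Topology TopologicalSpace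

universe u

/- The sets `{n | U ∩ K n ≠ ∅}`, for `U` in the base, form a family of at most `|𝓑|` subsets
of `ℕ`, so some infinite `A` is split by none of them: for each basic `U`, either almost all or
almost none of the `n ∈ A` have `K n` meeting `U`. Then a point of `Ls` has, inside any open
neighbourhood, a basic neighbourhood meeting infinitely many, hence almost all, `K n` with
`n ∈ A`; so it lies in `Li`. -/

section Kuratowski

variable {X : Type*}

def hitSet (K : ℕ → Set X) (U : Set X) : Set ℕ := {n | (U ∩ K n).Nonempty}

lemma hitSet_mono (K : ℕ → Set X) {U V : Set X} (hVU : V ⊆ U) : hitSet K V ⊆ hitSet K U :=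
  fun _ ⟨y, hyV, hyK⟩ => ⟨y, hVU hyV, hyK⟩

lemma kurLi_subset_kurLs (t : TopologicalSpace X) (K : ℕ → Set X) {A : Set ℕ}
    (hA : A.Infinite) : kurLi t K A ⊆ kurLs t K A := by
  intro x hx U hU hxU
  have hmeet : {n ∈ A | (U ∩ K n).Nonempty} = A \ {n ∈ A | U ∩ K n = ∅} := by
    ext n
    simp only [mem_ofPred_eq, mem_sdiff, nonempty_iff_ne_empty]
    tauto
  rw [hmeet]
  exact hA.sdiff (hx U hU hxU)

lemma kurLs_subset_kurLi [t : TopologicalSpace X] {B : Set (Set X)}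
    (hB : IsTopologicalBasis B) (K : ℕ → Set X) {A : Set ℕ}
    (hA : ∀ V ∈ B, (A ∩ hitSet K V).Infinite → (A \ hitSet K V).Finite) :
    kurLs t K A ⊆ kurLi t K A := by
  intro x hx U hU hxU
  obtain ⟨V, hVB, hxV, hVU⟩ := hB.exists_subset_of_mem_open hxU hU
  have hfin : (A \ hitSet K V).Finite := hA V hVB (hx V (hB.isOpen hVB) hxV)
  refine hfin.subset fun n ⟨hnA, hn⟩ => ⟨hnA, fun hnV => ?_⟩
  exact (hitSet_mono K hVU hnV).ne_empty hn

end Kuratowski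

/-- Booth: if `X` has a base of cardinality less than the splitting number `𝔰`,
then every sequence of subsets of `X` has a Kuratowski-convergent subsequence. -/
theorem stmt2 {X : Type u} [t : TopologicalSpace X] (B : Set (Set X))
    (hB : IsTopologicalBasis B)
    (hsmall : ∀ S : Set (Set ℕ),
      Cardinal.lift.{u} (Cardinal.mk S) ≤ Cardinal.mk B → ¬ IsSplittingFamily S)
    (K : ℕ → Set X) :
    ∃ A : Set ℕ, A.Infinite ∧ kurLi t K A = kurLs t K A := by
  have hcard : Cardinal.lift.{u} (Cardinal.mk (hitSet K '' B)) ≤ Cardinal.mk B := by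
    simpa using Cardinal.mk_image_le_lift (f := hitSet K) (s := B)
  have hunsplit := hsmall _ hcard
  simp only [IsSplittingFamily, not_forall, not_exists, not_and, forall_mem_image] at hunsplit
  obtain ⟨A, hA, hAB⟩ := hunsplit
  exact ⟨A, hA, (kurLi_subset_kurLs t K hA).antisymm <|
    kurLs_subset_kurLi hB K fun V hVB hV => Set.not_infinite.mp (hAB hVB hV)⟩
end

section
/- Let X be a topological space having a discrete subspace D such that there exists a splitting family 𝒮 of subsets of ℕ and an injection from 𝒮 into D (i.e., |D| ≥ 𝔰). Then there is a sequence (Kₙ)_{n∈ℕ} of subsets of X with no subsequence converging in the sense of Kuratowski. -/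
open Set Topology TopologicalSpace

/-! Index the points of the discrete subspace by the members of the splitting family and let `Kₙ`
consist of the points whose index set contains `n`. Given an infinite `A`, pick a member `s`
splitting it, with point `d`. Then `d ∈ Kₙ` for the infinitely many `n ∈ A ∩ s`, so `d` lies in the
upper limit; and a neighbourhood isolating `d` misses `Kₙ` for the infinitely many `n ∈ A \ s`,
so `d` is not in the lower limit. -/

theorem inter_image_setOf_mem_eq_empty {X ι : Type*} {e : ι → X} (he : Function.Injective e)
    {F : ι → Set ℕ} {U : Set X} {i : ι} (hU : U ∩ range e ⊆ {e i}) {n : ℕ} (hn : n ∉ F i) :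
    U ∩ e '' {j | n ∈ F j} = ∅ := by
  refine eq_empty_of_forall_notMem ?_
  rintro _ ⟨hxU, j, hj, rfl⟩
  have hji : j = i := he (hU ⟨hxU, mem_range_self j⟩)
  exact hn (hji ▸ hj)

section KuratowskiLimits

variable {X : Type*} [t : TopologicalSpace X]

theorem kurLi_ne_kurLs_of_split {K : ℕ → Set X} {A s : Set ℕ} {x : X} {U : Set X}
    (hU : IsOpen U) (hxU : x ∈ U) (hin : (A ∩ s).Infinite) (hxK : ∀ n ∈ s, x ∈ K n)
    (hout : (A \ s).Infinite) (hUK : ∀ n ∉ s, U ∩ K n = ∅) :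
    kurLi t K A ≠ kurLs t K A := by
  have hLs : x ∈ kurLs t K A := fun V _ hxV =>
    hin.mono fun n hn => ⟨hn.1, x, hxV, hxK n hn.2⟩
  have hLi : x ∉ kurLi t K A := fun hx =>
    hout <| (hx U hU hxU).subset fun n hn => ⟨hn.1, hUK n hn.2⟩
  exact fun h => hLi (h ▸ hLs)

theorem exists_seq_forall_kurLi_ne_kurLs {ι : Type*} {e : ι → X} (he : Function.Injective e)
    (hiso : ∀ i, ∃ U : Set X, IsOpen U ∧ U ∩ range e = {e i})
    {F : ι → Set ℕ} (hF : IsSplittingFamily (range F)) :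
    ∃ K : ℕ → Set X, ∀ A : Set ℕ, A.Infinite → kurLi t K A ≠ kurLs t K A := by
  refine ⟨fun n => e '' {j | n ∈ F j}, fun A hA => ?_⟩
  obtain ⟨_, ⟨i, rfl⟩, hin, hout⟩ := hF A hA
  obtain ⟨U, hU, hUi⟩ := hiso i
  have hiU : e i ∈ U := (hUi.symm.subset (mem_singleton _)).1
  exact kurLi_ne_kurLs_of_split hU hiU hin (fun n hn => mem_image_of_mem e hn) hout
    (fun n hn => inter_image_setOf_mem_eq_empty he hUi.subset hn)

end KuratowskiLimits

/-- If `X` has a discrete subspace `D` admitting an injection from a splitting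
family into it, then some sequence of subsets of `X` has no
Kuratowski-convergent subsequence. -/
theorem stmt5 {X : Type*} [t : TopologicalSpace X] (D : Set X)
    (hD : ∀ d ∈ D, ∃ U : Set X, IsOpen U ∧ U ∩ D = {d})
    (S : Set (Set ℕ)) (hS : IsSplittingFamily S)
    (φ : S → D) (hφ : Function.Injective φ) :
    ∃ K : ℕ → Set X, ∀ A : Set ℕ, A.Infinite → kurLi t K A ≠ kurLs t K A := by
  set e : S → X := Subtype.val ∘ φ
  have hrange : range e ⊆ D := range_subset_iff.2 fun s => (φ s).2
  have hiso : ∀ s, ∃ U : Set X, IsOpen U ∧ U ∩ range e = {e s} := fun s => by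
    obtain ⟨U, hU, hUD⟩ := hD _ (φ s).2
    refine ⟨U, hU, ?_⟩
    rw [← inter_eq_right.2 hrange, ← inter_assoc, hUD]
    exact singleton_inter_of_mem (mem_range_self s)
  exact exists_seq_forall_kurLi_ne_kurLs (Subtype.val_injective.comp hφ) hiso
    (F := Subtype.val) (by rwa [Subtype.range_coe])
end

section
/- Let X be a topological space, D ⊆ X a discrete subspace, 𝒮 a splitting family of subsets of ℕ, and φ : 𝒮 → D an injective function. For each n ∈ ℕ define Kₙ = {φ(S) : S ∈ 𝒮 and n ∈ S}. Then for every infinite A ⊆ ℕ the subsequence (Kₙ)_{n∈A} does not converge in the sense of Kuratowski; more precisely, there is S ∈ 𝒮 splitting A such that φ(S) ∈ Ls (Kₙ)_{n∈A} \ Li (Kₙ)_{n∈A}. -/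
open Set Topology TopologicalSpace

/-!
Pick `s ∈ S` splitting `A`. By injectivity of `φ`, the point `φ s` lies in `Kₙ` exactly when
`n ∈ s`, so it lies in `Kₙ` for the infinitely many `n ∈ A ∩ s` and hence in `Ls`. Since all `Kₙ`
lie in `D` and `φ s` is isolated in `D`, a neighbourhood of `φ s` misses `Kₙ` for the infinitely
many `n ∈ A \ s`, hence `φ s ∉ Li`.
-/

section KuratowskiLimits

variable {X : Type*} (t : TopologicalSpace X) {K : ℕ → Set X} {A : Set ℕ} {x : X}

theorem mem_kurLs_of_infinite (h : {n ∈ A | x ∈ K n}.Infinite) : x ∈ kurLs t K A :=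
  fun _ _ hxU => h.mono fun _ hn => ⟨hn.1, x, hxU, hn.2⟩

theorem finite_of_mem_kurLi_of_isolated {U : Set X} (hU : IsOpen[t] U) (hxU : x ∈ U)
    (hUK : ∀ n, U ∩ K n ⊆ {x}) (hx : x ∈ kurLi t K A) : {n ∈ A | x ∉ K n}.Finite := by
  refine (hx U hU hxU).subset fun n ⟨hnA, hxK⟩ => ⟨hnA, ?_⟩
  refine eq_empty_of_forall_notMem fun y hy => hxK ?_
  obtain rfl : y = x := hUK n hy
  exact hy.2

end KuratowskiLimits

/-- With `D ⊆ X` discrete, `S` a splitting family, `φ : S → D` injective and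
`Kₙ = {φ s : s ∈ S, n ∈ s}`, no subsequence of `(Kₙ)` converges in the sense
of Kuratowski; more precisely, for each infinite `A ⊆ ℕ` there is an `s ∈ S`
splitting `A` with `φ s ∈ Ls \ Li` of the subsequence. -/
theorem stmt6 {X : Type*} [t : TopologicalSpace X] (D : Set X)
    (hD : ∀ d ∈ D, ∃ U : Set X, IsOpen U ∧ U ∩ D = {d})
    (S : Set (Set ℕ)) (hS : IsSplittingFamily S)
    (φ : S → X) (hφ : Function.Injective φ) (hφD : ∀ s, φ s ∈ D)
    (K : ℕ → Set X)
    (hK : ∀ n, K n = {x | ∃ s : S, n ∈ (s : Set ℕ) ∧ x = φ s})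
    (A : Set ℕ) (hA : A.Infinite) :
    kurLi t K A ≠ kurLs t K A ∧
      ∃ s : S, (A ∩ (s : Set ℕ)).Infinite ∧ (A \ (s : Set ℕ)).Infinite ∧
        φ s ∈ kurLs t K A \ kurLi t K A := by
  obtain ⟨s₀, hs₀, hAs, hAs'⟩ := hS A hA
  set s : S := ⟨s₀, hs₀⟩
  have hmem : ∀ n, φ s ∈ K n ↔ n ∈ s₀ := fun n => by
    rw [hK n]
    exact ⟨fun ⟨_, hn, he⟩ => (hφ he ▸ hn : n ∈ (s : Set ℕ)), fun hn => ⟨s, hn, rfl⟩⟩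
  obtain ⟨U, hU, hUD⟩ := hD (φ s) (hφD s)
  have hKD : ∀ n, K n ⊆ D := fun n x hx => by
    rw [hK n] at hx
    obtain ⟨s', _, rfl⟩ := hx
    exact hφD s'
  have hLs : φ s ∈ kurLs t K A :=
    mem_kurLs_of_infinite t <| by simpa only [hmem, sep_mem_eq] using hAs
  have hLi : φ s ∉ kurLi t K A := fun h => hAs' <| by
    have hxU : φ s ∈ U := (hUD.ge (mem_singleton _)).1
    have hUK : ∀ n, U ∩ K n ⊆ {φ s} := fun n => hUD ▸ inter_subset_inter_right U (hKD n)
    simpa only [hmem, sdiff_eq, ← sep_mem_eq, mem_compl_iff] using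
      finite_of_mem_kurLi_of_isolated t hU hxU hUK h
  exact ⟨(ne_of_mem_of_not_mem' hLs hLi).symm, s, hAs, hAs', hLs, hLi⟩
end

section
/- Let X be a metrizable topological space in which every sequence of subsets has a subsequence converging in the sense of Kuratowski. Then for every splitting family 𝒮 of subsets of ℕ, X has a dense subset of cardinality strictly less than |𝒮| (i.e., the density of X is strictly less than the splitting number 𝔰). -/
/-!
Let `T` be a splitting family of minimal size `𝔰`. If `T` injects into a discrete subspace `Y`
via `s ↦ x s`, put `K n = {x s | n ∈ s}` and pass to a Kuratowski-convergent subsequence indexed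
by `A`. A member `s` of `T` splitting `A` puts `x s` into the upper limit (along `A ∩ s`) but not
into the lower limit (a neighbourhood isolating `x s` in `Y` misses `K n` for `n ∈ A \ s`), so
discrete subspaces have fewer than `𝔰` points. A metric space has a dense set `⋃ n, D n` with
`D n` a maximal `1/(n+1)`-separated, hence discrete, set. Finally, by Blass's argument a countable
union of families of size `< 𝔰` is not splitting (shrink to a decreasing sequence of infinite
sets, the `n`-th unsplit by the `n`-th family, and take a pseudo-intersection), which gives
`#(⋃ n, D n) < 𝔰`.
-/

open Set Topology TopologicalSpace

universe u

open Cardinal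
open scoped NNReal ENNReal

def IsUnsplitBy (T : Set (Set ℕ)) (C : Set ℕ) : Prop :=
  ∀ s ∈ T, (C ∩ s).Finite ∨ (C \ s).Finite

/-- `sInf ∅ = 0`, so lemmas about `splittingNumber` assume that some splitting family exists. -/
noncomputable def splittingNumber : Cardinal.{0} :=
  sInf {c | ∃ S : Set (Set ℕ), IsSplittingFamily S ∧ #S = c}

section Splitting

variable {S T : Set (Set ℕ)} {A C : Set ℕ}

theorem isSplittingFamily_iff :
    IsSplittingFamily T ↔ ∀ C : Set ℕ, C.Infinite → ¬IsUnsplitBy T C := by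
  simp only [IsSplittingFamily, IsUnsplitBy, not_forall, not_or, Set.not_finite, exists_prop]

theorem IsSplittingFamily.mono (hS : IsSplittingFamily S) (hST : S ⊆ T) : IsSplittingFamily T :=
  fun A hA ↦ let ⟨s, hs, hsplit⟩ := hS A hA; ⟨s, hST hs, hsplit⟩

theorem IsUnsplitBy.of_diff_finite (hC : IsUnsplitBy T C) (hAC : (A \ C).Finite) :
    IsUnsplitBy T A := by
  intro s hs
  refine (hC s hs).imp (fun h ↦ (hAC.union h).subset ?_) (fun h ↦ (hAC.union h).subset ?_) <;>
  · intro x hx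
    by_cases hxC : x ∈ C <;> simp_all

theorem splittingNumber_le_mk (hS : IsSplittingFamily S) : splittingNumber ≤ #S :=
  csInf_le' ⟨S, hS, rfl⟩

theorem exists_isSplittingFamily_mk_eq_splittingNumber (hS : IsSplittingFamily S) :
    ∃ T : Set (Set ℕ), IsSplittingFamily T ∧ #T = splittingNumber :=
  csInf_mem (s := {c | ∃ S : Set (Set ℕ), IsSplittingFamily S ∧ #S = c}) ⟨#S, S, hS, rfl⟩

theorem exists_infinite_isUnsplitBy_of_mk_lt (hT : #T < splittingNumber) :
    ∃ C : Set ℕ, C.Infinite ∧ IsUnsplitBy T C := by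
  have : ¬IsSplittingFamily T := fun h ↦ (splittingNumber_le_mk h).not_gt hT
  simpa [isSplittingFamily_iff] using this

theorem exists_infinite_subset_isUnsplitBy_of_mk_lt (hT : #T < splittingNumber) {B : Set ℕ}
    (hB : B.Infinite) : ∃ C ⊆ B, C.Infinite ∧ IsUnsplitBy T C := by
  set φ := Nat.nth (· ∈ B)
  have hφ : φ.Injective := Nat.nth_injective hB
  obtain ⟨C, hC, hCT⟩ := exists_infinite_isUnsplitBy_of_mk_lt (T := (φ ⁻¹' ·) '' T)
    (mk_image_le.trans_lt hT)
  refine ⟨φ '' C, ?_, hC.image hφ.injOn, fun s hs ↦ ?_⟩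
  · rintro _ ⟨n, -, rfl⟩
    exact Nat.nth_mem_of_infinite hB n
  · rw [← image_inter_preimage, ← image_sdiff_preimage]
    exact (hCT _ ⟨s, hs, rfl⟩).imp (·.image φ) (·.image φ)

theorem exists_antitone_isUnsplitBy (T : ℕ → Set (Set ℕ))
    (hT : ∀ n, #(T n) < splittingNumber) :
    ∃ B : ℕ → Set ℕ, Antitone B ∧ ∀ n, (B n).Infinite ∧ IsUnsplitBy (T n) (B n) := by
  choose! g hgB hg hgT using fun n (B : Set ℕ) (hB : B.Infinite) ↦
    exists_infinite_subset_isUnsplitBy_of_mk_lt (hT n) hB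
  let B : ℕ → {B : Set ℕ // B.Infinite} := fun n ↦
    Nat.rec ⟨g 0 Set.univ, hg 0 _ infinite_univ⟩
      (fun n B ↦ ⟨g (n + 1) B, hg (n + 1) _ B.2⟩) n
  refine ⟨fun n ↦ (B n).1, antitone_nat_of_succ_le fun n ↦ hgB (n + 1) _ (B n).2,
    fun n ↦ ⟨(B n).2, ?_⟩⟩
  cases n with
  | zero => exact hgT 0 _ infinite_univ
  | succ n => exact hgT (n + 1) _ (B n).2

theorem exists_infinite_forall_diff_finite {B : ℕ → Set ℕ} (hB : Antitone B)
    (hBinf : ∀ n, (B n).Infinite) : ∃ A : Set ℕ, A.Infinite ∧ ∀ n, (A \ B n).Finite := by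
  choose a haB ha using fun n ↦ (hBinf n).exists_gt n
  refine ⟨range a, infinite_of_not_bddAbove ?_, fun n ↦ ?_⟩
  · rintro ⟨b, hb⟩
    exact (ha b).not_ge (hb ⟨b, rfl⟩)
  · refine ((finite_Iio n).image a).subset ?_
    rintro _ ⟨⟨m, rfl⟩, hm⟩
    exact ⟨m, not_le.1 fun hnm ↦ hm (hB hnm (haB m)), rfl⟩

theorem not_isSplittingFamily_iUnion (T : ℕ → Set (Set ℕ))
    (hT : ∀ n, #(T n) < splittingNumber) :
    ¬IsSplittingFamily (⋃ n, T n) := by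
  obtain ⟨B, hBanti, hB⟩ := exists_antitone_isUnsplitBy T hT
  obtain ⟨A, hA, hAB⟩ := exists_infinite_forall_diff_finite hBanti fun n ↦ (hB n).1
  refine fun hsplit ↦ isSplittingFamily_iff.1 hsplit A hA fun s hs ↦ ?_
  obtain ⟨n, hn⟩ := mem_iUnion.1 hs
  exact (hB n).2.of_diff_finite (hAB n) s hn

theorem mk_iUnion_lt_lift_splittingNumber {X : Type u} (hS : IsSplittingFamily S)
    (D : ℕ → Set X) (hD : ∀ n, #(D n) < lift.{u} splittingNumber) :
    #(⋃ n, D n) < lift.{u} splittingNumber := by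
  obtain ⟨T, hT, hTmk⟩ := exists_isSplittingFamily_mk_eq_splittingNumber hS
  by_contra! h
  rw [← hTmk, ← lift_uzero #(⋃ n, D n)] at h
  obtain ⟨f⟩ := lift_mk_le'.1 h
  let Tn : ℕ → Set (Set ℕ) := fun n ↦ Subtype.val '' {s : T | (f s : X) ∈ D n}
  refine not_isSplittingFamily_iUnion Tn (fun n ↦ lift_lt.1 ?_) (hT.mono fun s hs ↦ ?_)
  · calc lift.{u} #(Tn n) ≤ lift.{u} #{s : T | (f s : X) ∈ D n} := lift_le.2 mk_image_le
      _ ≤ lift.{0} #(D n) := lift_mk_le_lift_mk_of_injective (f := fun s ↦ ⟨f s, s.2⟩)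
          fun s s' h ↦ Subtype.val_injective (f.injective (Subtype.val_injective
            (Subtype.mk.inj h)))
      _ < lift.{u} splittingNumber := by rw [lift_uzero]; exact hD n
  · obtain ⟨n, hn⟩ := mem_iUnion.1 (f ⟨s, hs⟩).2
    exact mem_iUnion.2 ⟨n, ⟨s, hs⟩, hn, rfl⟩

end Splitting

theorem mk_lt_lift_mk_of_discreteTopology {X : Type u} [t : TopologicalSpace X]
    (hGBW : ∀ K : ℕ → Set X, ∃ A : Set ℕ, A.Infinite ∧ kurLi t K A = kurLs t K A)
    {T : Set (Set ℕ)} (hT : IsSplittingFamily T) (Y : Set X) [DiscreteTopology Y] :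
    #Y < lift.{u} #T := by
  by_contra! h
  rw [← lift_uzero #Y] at h
  obtain ⟨f⟩ := lift_mk_le'.1 h
  let K : ℕ → Set X := fun n ↦ (fun s ↦ (f s : X)) '' {s | n ∈ (s : Set ℕ)}
  obtain ⟨A, hA, hLiLs⟩ := hGBW K
  obtain ⟨s, hs, hAs, hAs'⟩ := hT A hA
  have hLs : (f ⟨s, hs⟩ : X) ∈ kurLs t K A := fun U _ hU ↦
    hAs.mono fun n hn ↦ ⟨hn.1, _, hU, ⟨s, hs⟩, hn.2, rfl⟩
  obtain ⟨U, hUo, hU⟩ := isOpen_induced_iff.1 (isOpen_discrete {f ⟨s, hs⟩})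
  have hxU : (f ⟨s, hs⟩ : X) ∈ U := by rw [← mem_preimage, hU]; rfl
  have hLi : {n ∈ A | U ∩ K n = ∅}.Finite := (hLiLs ▸ hLs) U hUo hxU
  refine hAs' (hLi.subset fun n hn ↦ ⟨hn.1, eq_empty_iff_forall_notMem.2 ?_⟩)
  rintro _ ⟨hzU, s', hns', rfl⟩
  have : f s' ∈ Subtype.val ⁻¹' U := hzU
  rw [hU, mem_singleton_iff, f.apply_eq_iff_eq] at this
  subst this
  exact hn.2 hns'

namespace Metric

theorem exists_isCover_isSeparated {X : Type*} [PseudoEMetricSpace X] (ε : ℝ≥0) :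
    ∃ N : Set X, IsCover ε Set.univ N ∧ IsSeparated ε N := by
  obtain ⟨N, hN⟩ : ∃ N : Set X, Maximal (fun N ↦ N ⊆ Set.univ ∧ IsSeparated ε N) N :=
    zorn_subset _ fun c hc hchain ↦ ⟨⋃₀ c, ⟨subset_univ _,
      hchain.pairwise_sUnion.2 fun s hs ↦ (hc hs).2⟩, fun _ ↦ subset_sUnion_of_mem⟩
  exact ⟨N, .of_maximal_isSeparated hN, hN.1.2⟩

theorem IsSeparated.discreteTopology {X : Type*} [PseudoMetricSpace X] {ε : ℝ≥0} (hε : 0 < ε)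
    {s : Set X} (hs : IsSeparated ε s) : DiscreteTopology s :=
  .of_forall_le_dist (r := ε) hε fun x y hxy ↦ by
    have : (ε : ℝ≥0∞) < edist (x : X) y := hs x.2 y.2 (Subtype.coe_ne_coe.2 hxy)
    rw [edist_dist, ENNReal.coe_lt_ofReal] at this
    exact this.le

theorem dense_iUnion_of_isCover {X : Type*} [PseudoEMetricSpace X] {N : ℕ → Set X}
    (hN : ∀ n : ℕ, IsCover ((n : ℝ≥0) + 1)⁻¹ Set.univ (N n)) : Dense (⋃ n, N n) := by
  refine EMetric.dense_iff.2 fun x r hr ↦ ?_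
  obtain ⟨n, hn⟩ := ENNReal.exists_inv_nat_lt hr.ne'
  obtain ⟨y, hy, hxy⟩ := hN n (mem_univ x)
  refine ⟨y, ?_, mem_iUnion.2 ⟨n, hy⟩⟩
  rw [mem_eball, edist_comm]
  exact (hxy.trans (by simp)).trans_lt hn

theorem exists_dense_iUnion_discreteTopology (X : Type*) [PseudoMetricSpace X] :
    ∃ D : ℕ → Set X, Dense (⋃ n, D n) ∧ ∀ n, DiscreteTopology (D n) := by
  choose D hcover hsep using fun n : ℕ ↦
    exists_isCover_isSeparated (X := X) ((n : ℝ≥0) + 1)⁻¹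
  exact ⟨D, dense_iUnion_of_isCover hcover, fun n ↦ (hsep n).discreteTopology (by positivity)⟩

end Metric

/-- A metrizable space with the generalized Bolzano–Weierstrass property has
density less than the splitting number: it has a dense subset of cardinality
strictly less than that of any splitting family. -/
theorem stmt7 {X : Type u} [t : TopologicalSpace X] [MetrizableSpace X]
    (hGBW : ∀ K : ℕ → Set X, ∃ A : Set ℕ, A.Infinite ∧ kurLi t K A = kurLs t K A)
    (S : Set (Set ℕ)) (hS : IsSplittingFamily S) :
    ∃ D : Set X, Dense D ∧ Cardinal.mk D < Cardinal.lift.{u} (Cardinal.mk S) := by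
  let := metrizableSpaceMetric X
  obtain ⟨D, hDense, hDdisc⟩ := Metric.exists_dense_iUnion_discreteTopology X
  obtain ⟨T, hT, hTmk⟩ := exists_isSplittingFamily_mk_eq_splittingNumber hS
  have hDn (n : ℕ) : #(D n) < lift.{u} splittingNumber :=
    hTmk ▸ mk_lt_lift_mk_of_discreteTopology hGBW hT (D n)
  refine ⟨⋃ n, D n, hDense, ?_⟩
  calc #(⋃ n, D n) < lift.{u} splittingNumber := mk_iUnion_lt_lift_splittingNumber hS D hDn
    _ ≤ lift.{u} #S := lift_le.2 (splittingNumber_le_mk hS)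
end

section
/- Let (Kₙ)_{n∈ℕ} be a sequence of subsets of ℝ that converges, in the sense of Kuratowski with respect to the usual topology of ℝ, to a set K. Then the set of points x ∈ K for which there exists r > x such that {n ∈ ℕ : [x,r) ∩ Kₙ = ∅} is infinite is countable. -/
open Set Topology TopologicalSpace

/-!
If `[x, r)` misses infinitely many `Kₙ`, then no point `y` of the lower limit lies
in `(x, r)`, since `(x, r)` is a neighbourhood of `y` missing those `Kₙ`. So every such `x`
is isolated on the right in the lower limit, and in a second-countable linear order only
countably many points of a set are isolated on the right in it.
-/

section KuratowskiLimit

variable {X : Type*} [LinearOrder X] [TopologicalSpace X]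

theorem le_of_mem_kurLi_of_infinite_Ico [OrderClosedTopology X] {K : ℕ → Set X}
    {A : Set ℕ} {x r y : X} (hy : y ∈ kurLi ‹_› K A) (hxy : x < y)
    (hinf : {n ∈ A | Ico x r ∩ K n = ∅}.Infinite) : r ≤ y := by
  by_contra! hyr
  refine hinf ((hy (Ioo x r) isOpen_Ioo ⟨hxy, hyr⟩).subset ?_)
  rintro n ⟨hnA, hn⟩
  exact ⟨hnA, subset_eq_empty (inter_subset_inter_left _ Ioo_subset_Ico_self) hn⟩

theorem countable_setOf_mem_kurLi_infinite_Ico [OrderTopology X] [SecondCountableTopology X]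
    (K : ℕ → Set X) (A : Set ℕ) :
    {x ∈ kurLi ‹_› K A | ∃ r, x < r ∧ {n ∈ A | Ico x r ∩ K n = ∅}.Infinite}.Countable := by
  refine (countable_image_lt_image_Ioi_within (kurLi ‹_› K A) id).mono ?_
  rintro x ⟨hx, r, hxr, hinf⟩
  exact ⟨hx, r, hxr, fun y hy hxy ↦ le_of_mem_kurLi_of_infinite_Ico hy hxy hinf⟩

end KuratowskiLimit

theorem stmt9_general (K : ℕ → Set ℝ) (L : Set ℝ)
    (hLi : kurLi (inferInstance : TopologicalSpace ℝ) K Set.univ = L) :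
    {x ∈ L | ∃ r : ℝ, x < r ∧ {n : ℕ | Set.Ico x r ∩ K n = ∅}.Infinite}.Countable := by
  subst hLi
  simpa only [mem_univ, true_and] using countable_setOf_mem_kurLi_infinite_Ico K univ

/-- If `(Kₙ)` Kuratowski-converges to `L` in the usual topology of `ℝ`, then
only countably many `x ∈ L` admit an `r > x` such that `[x, r)` misses `Kₙ`
for infinitely many `n`. -/
theorem stmt9 (K : ℕ → Set ℝ) (L : Set ℝ)
    (hLi : kurLi (inferInstance : TopologicalSpace ℝ) K Set.univ = L)
    (hLs : kurLs (inferInstance : TopologicalSpace ℝ) K Set.univ = L) :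
    {x ∈ L | ∃ r : ℝ, x < r ∧ {n : ℕ | Set.Ico x r ∩ K n = ∅}.Infinite}.Countable :=
  stmt9_general K L hLi
end

section
/- Let X be a countably compact topological space in which every sequence of subsets has a subsequence converging in the sense of Kuratowski. Then X is sequentially compact: every sequence of points of X has a subsequence converging to a point of X. -/
/-!
Apply the generalized Bolzano–Weierstrass property to the singletons `{x n}`: along some
infinite `A ⊆ ℕ` their lower and upper closed limits agree. Countable compactness gives a cluster
point `p` of `x` along the increasing enumeration of `A`, which puts `p` in the upper limit; being
then in the lower limit says exactly that `x` converges to `p` along `A`.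
-/

open Set Topology TopologicalSpace

open Filter

section KuratowskiSingleton

variable {X : Type*} [t : TopologicalSpace X] {x : ℕ → X} {A : Set ℕ} {φ : ℕ → ℕ} {p : X}

theorem mem_kurLs_singleton_of_mapClusterPt (hφ : Function.Injective φ) (hφA : ∀ k, φ k ∈ A)
    (hp : MapClusterPt p atTop (x ∘ φ)) : p ∈ kurLs t (fun n => {x n}) A := by
  intro U hU hpU
  have hfreq : {k | x (φ k) ∈ U}.Infinite :=
    Nat.frequently_atTop_iff_infinite.1 (mapClusterPt_iff_frequently.1 hp U (hU.mem_nhds hpU))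
  refine (hfreq.image hφ.injOn).mono ?_
  rintro _ ⟨k, hk, rfl⟩
  exact ⟨hφA k, x (φ k), hk, rfl⟩

theorem tendsto_of_mem_kurLi_singleton (hφ : Function.Injective φ) (hφA : ∀ k, φ k ∈ A)
    (hp : p ∈ kurLi t (fun n => {x n}) A) : Tendsto (x ∘ φ) atTop (𝓝 p) := by
  refine tendsto_nhds.2 fun U hU hpU => ?_
  rw [← Nat.cofinite_eq_atTop, mem_cofinite]
  refine ((hp U hU hpU).preimage hφ.injOn).subset fun k hk => ⟨hφA k, ?_⟩
  refine eq_empty_of_forall_notMem ?_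
  rintro _ ⟨hxU, rfl⟩
  exact hk hxU

end KuratowskiSingleton

/-- A countably compact space with the generalized Bolzano–Weierstrass
property is sequentially compact. -/
theorem stmt10 {X : Type*} [t : TopologicalSpace X]
    (hcc : ∀ U : ℕ → Set X, (∀ n, IsOpen (U n)) → (⋃ n, U n) = Set.univ →
      ∃ F : Finset ℕ, (⋃ n ∈ F, U n) = Set.univ)
    (hGBW : ∀ K : ℕ → Set X, ∃ A : Set ℕ, A.Infinite ∧ kurLi t K A = kurLs t K A)
    (x : ℕ → X) :
    ∃ (p : X) (φ : ℕ → ℕ), StrictMono φ ∧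
      Filter.Tendsto (x ∘ φ) Filter.atTop (nhds p) := by
  have hX : IsCountablyCompact (univ : Set X) :=
    isCountablyCompact_iff_countable_open_cover.2 fun U hU hcov =>
      (hcc U hU (univ_subset_iff.1 hcov)).imp fun _ hF => hF.ge
  obtain ⟨A, hA, hLiLs⟩ := hGBW fun n => {x n}
  set φ := Nat.nth (· ∈ A)
  have hφ : StrictMono φ := Nat.nth_strictMono hA
  have hφA : ∀ k, φ k ∈ A := Nat.nth_mem_of_infinite hA
  obtain ⟨p, -, hp⟩ := hX.seq_clusterPt (x ∘ φ) (Eventually.of_forall fun _ => mem_univ _)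
  have hpLs := mem_kurLs_singleton_of_mapClusterPt hφ.injective hφA hp
  exact ⟨p, φ, hφ, tendsto_of_mem_kurLi_singleton hφ.injective hφA (hLiLs ▸ hpLs)⟩
end

section
/- Let X be an infinite compact Hausdorff space in which every convergent sequence of points is eventually constant (X has no non-trivial convergent sequences). Then there is a sequence (Kₙ)_{n∈ℕ} of subsets of X with no subsequence converging in the sense of Kuratowski. -/
/-!
Take `K n = {e n}` for an injective sequence `e`. Along an infinite `A ⊆ ℕ`, the upper limit of
these singletons is the set of cluster points of `e` along the cofinite filter restricted to `A`,
nonempty by compactness, while the lower limit is the set of limits along that filter. If the two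
agreed, the injective sequence `e ∘ Nat.nth (· ∈ A)` would converge.
-/

open Set Topology TopologicalSpace

open Filter

section SingletonSequence

variable {X : Type*} [t : TopologicalSpace X] (u : ℕ → X) (A : Set ℕ) (x : X)

theorem mem_kurLi_singleton_iff :
    x ∈ kurLi t (fun n => {u n}) A ↔ Tendsto u (cofinite ⊓ 𝓟 A) (𝓝 x) := by
  rw [(nhds_basis_opens x).tendsto_right_iff]
  refine forall_congr' fun U => ?_
  simp only [eventually_inf_principal, eventually_cofinite, Set.inter_singleton_eq_empty]
  grind

theorem mem_kurLs_singleton_iff :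
    x ∈ kurLs t (fun n => {u n}) A ↔ MapClusterPt x (cofinite ⊓ 𝓟 A) u := by
  rw [mapClusterPt_iff_frequently,
    (nhds_basis_opens x).forall_iff fun _ _ hst hs => hs.mono fun _ => (hst ·)]
  refine forall_congr' fun U => ?_
  simp only [frequently_inf_principal, frequently_cofinite_iff_infinite,
    Set.inter_singleton_nonempty]
  grind

end SingletonSequence

theorem tendsto_nth_cofinite_inf_principal {A : Set ℕ} (hA : A.Infinite) :
    Tendsto (Nat.nth (· ∈ A)) atTop (cofinite ⊓ 𝓟 A) :=
  tendsto_inf.2 ⟨Nat.cofinite_eq_atTop ▸ (Nat.nth_strictMono hA).tendsto_atTop,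
    tendsto_principal.2 (Eventually.of_forall (Nat.nth_mem_of_infinite hA))⟩

theorem not_tendsto_cofinite_inf_principal_of_injective {X : Type*} [TopologicalSpace X]
    (htriv : ∀ (x : ℕ → X) (p : X), Tendsto x atTop (𝓝 p) → ∃ m : ℕ, ∀ n ≥ m, x n = x m)
    {u : ℕ → X} (hu : u.Injective) {A : Set ℕ} (hA : A.Infinite) (p : X) :
    ¬Tendsto u (cofinite ⊓ 𝓟 A) (𝓝 p) := fun h => by
  obtain ⟨m, hm⟩ := htriv _ p (h.comp (tendsto_nth_cofinite_inf_principal hA))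
  have := (hu.comp (Nat.nth_injective hA)) (hm (m + 1) m.le_succ)
  omega

theorem stmt11_general {X : Type*} [t : TopologicalSpace X] [Infinite X]
    [CompactSpace X]
    (htriv : ∀ (x : ℕ → X) (p : X), Filter.Tendsto x Filter.atTop (nhds p) →
      ∃ m : ℕ, ∀ n ≥ m, x n = x m) :
    ∃ K : ℕ → Set X, ∀ A : Set ℕ, A.Infinite → kurLi t K A ≠ kurLs t K A := by
  set e := Infinite.natEmbedding X
  refine ⟨fun n => {e n}, fun A hA hLi => ?_⟩
  have := hA.cofinite_inf_principal_neBot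
  obtain ⟨p, hp⟩ := exists_clusterPt_of_compactSpace (map e (cofinite ⊓ 𝓟 A))
  have hpLi : p ∈ kurLi t (fun n => {e n}) A := hLi ▸ (mem_kurLs_singleton_iff e A p).2 hp
  exact not_tendsto_cofinite_inf_principal_of_injective htriv e.injective hA p
    ((mem_kurLi_singleton_iff e A p).1 hpLi)

/-- An infinite compact Hausdorff space with no non-trivial convergent
sequences has a sequence of subsets with no Kuratowski-convergent
subsequence. -/
theorem stmt11 {X : Type*} [t : TopologicalSpace X] [Infinite X]
    [CompactSpace X] [T2Space X]
    (htriv : ∀ (x : ℕ → X) (p : X), Filter.Tendsto x Filter.atTop (nhds p) →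
      ∃ m : ℕ, ∀ n ≥ m, x n = x m) :
    ∃ K : ℕ → Set X, ∀ A : Set ℕ, A.Infinite → kurLi t K A ≠ kurLs t K A :=
  stmt11_general (t := t) htriv
end

section
/- Let κ be a cardinal of uncountable cofinality, let (x_α)_{α<κ} be an injective transfinite sequence of real numbers, let X = {x_α : α < κ}, and for α < κ let V_α = {x_ξ : ξ ≤ α}. Equip X with the topology 𝒯 generated by the subspace topology inherited from the usual topology of ℝ together with all the sets V_α, α < κ. Then for every subset K ⊆ X there exists δ < κ such that K ∩ V_δ is dense in K with respect to 𝒯 (i.e., K is contained in the 𝒯-closure of K ∩ V_δ). -/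
open Set Topology TopologicalSpace

/-- The topology on `X = {x_α : α < κ}` generated by the subspace topology
inherited from the usual topology of `ℝ` together with the initial segments
`V_α = {x_ξ : ξ ≤ α}`. -/
def vTop {κ : Cardinal} (x : {o : Ordinal // o < κ.ord} → ℝ) :
    TopologicalSpace ↥(Set.range x) :=
  TopologicalSpace.generateFrom
    ({V : Set ↥(Set.range x) | ∃ U : Set ℝ, IsOpen U ∧ V = Subtype.val ⁻¹' U} ∪
      {V : Set ↥(Set.range x) | ∃ α : {o : Ordinal // o < κ.ord},
        V = {p : ↥(Set.range x) | ∃ ξ : {o : Ordinal // o < κ.ord},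
          (ξ : Ordinal) ≤ (α : Ordinal) ∧ (p : ℝ) = x ξ}})

universe u v

theorem exists_forall_exists_mem_le_of_bddAbove {α ι : Type*} [LinearOrder α] [WellFoundedLT α]
    [Nonempty α] (hbdd : ∀ f : ι → α, BddAbove (range f)) (A : ι → Set α) :
    ∃ δ, ∀ i, ∀ η ∈ A i, ∃ ξ ∈ A i, ξ ≤ δ ∧ ξ ≤ η := by
  classical
  let m i : α := if h : (A i).Nonempty then wellFounded_lt.min (A i) h else Classical.arbitrary α
  obtain ⟨δ, hδ⟩ := hbdd m
  refine ⟨δ, fun i η hη => ?_⟩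
  have hne : (A i).Nonempty := ⟨η, hη⟩
  have hm : m i = wellFounded_lt.min (A i) hne := dif_pos hne
  exact ⟨m i, hm ▸ wellFounded_lt.min_mem _ _, hδ ⟨i, rfl⟩, hm ▸ wellFounded_lt.min_le hη⟩

theorem Ordinal.bddAbove_range_of_countable {o : Ordinal.{u}} (hcof : Cardinal.aleph0 < o.cof)
    {ι : Type v} [Countable ι] (f : ι → {a : Ordinal.{u} // a < o}) : BddAbove (range f) := by
  refine ⟨⟨⨆ i, (f i : Ordinal), Ordinal.lift_iSup_lt_of_lt_cof ?_ fun i => (f i).2⟩, ?_⟩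
  · rw [← Ordinal.lift_cof]
    exact (Cardinal.lift_le_aleph0.2 Cardinal.mk_le_aleph0).trans_lt (Cardinal.aleph0_lt_lift.2 hcof)
  · rintro _ ⟨i, rfl⟩
    exact Ordinal.le_iSup (fun i => (f i : Ordinal)) i

theorem exists_inter_subset_of_isOpen_generateFrom {X ι : Type*} [LinearOrder ι]
    (t : TopologicalSpace X) {V : ι → Set X} (hV : Monotone V) (hcover : ∀ p, ∃ i, p ∈ V i)
    {W : Set X} (hW : IsOpen[generateFrom ({s | IsOpen[t] s} ∪ range V)] W) {p : X}
    (hp : p ∈ W) : ∃ U, IsOpen[t] U ∧ p ∈ U ∧ ∃ i, p ∈ V i ∧ U ∩ V i ⊆ W := by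
  induction hW generalizing p with
  | basic W hW =>
    rcases hW with hW | ⟨i, rfl⟩
    · obtain ⟨i, hi⟩ := hcover p
      exact ⟨W, hW, hp, i, hi, inter_subset_left⟩
    · exact ⟨univ, isOpen_univ, mem_univ p, i, hp, inter_subset_right⟩
  | univ =>
    obtain ⟨i, hi⟩ := hcover p
    exact ⟨univ, isOpen_univ, mem_univ p, i, hi, subset_univ _⟩
  | inter W₁ W₂ _ _ ih₁ ih₂ =>
    obtain ⟨U₁, hU₁, hpU₁, i₁, hpi₁, hsub₁⟩ := ih₁ hp.1
    obtain ⟨U₂, hU₂, hpU₂, i₂, hpi₂, hsub₂⟩ := ih₂ hp.2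
    obtain ⟨j, hpj, hj₁, hj₂⟩ : ∃ j, p ∈ V j ∧ V j ⊆ V i₁ ∧ V j ⊆ V i₂ :=
      (le_total i₁ i₂).elim (fun h => ⟨i₁, hpi₁, le_rfl, hV h⟩)
        (fun h => ⟨i₂, hpi₂, hV h, le_rfl⟩)
    refine ⟨U₁ ∩ U₂, hU₁.inter hU₂, ⟨hpU₁, hpU₂⟩, j, hpj, fun q hq => ⟨?_, ?_⟩⟩
    · exact hsub₁ ⟨hq.1.1, hj₁ hq.2⟩
    · exact hsub₂ ⟨hq.1.2, hj₂ hq.2⟩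
  | sUnion 𝒮 _ ih =>
    obtain ⟨W, hW𝒮, hpW⟩ := hp
    obtain ⟨U, hU, hpU, i, hpi, hsub⟩ := ih W hW𝒮 hpW
    exact ⟨U, hU, hpU, i, hpi, hsub.trans (subset_sUnion_of_mem hW𝒮)⟩

theorem Real.exists_rat_Ioo_subset_of_mem_nhds {a : ℝ} {U : Set ℝ} (hU : U ∈ 𝓝 a) :
    ∃ q r : ℚ, a ∈ Ioo (q : ℝ) r ∧ Ioo (q : ℝ) r ⊆ U := by
  obtain ⟨_, hB, ha, hsub⟩ := Real.isTopologicalBasis_Ioo_rat.mem_nhds_iff.1 hU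
  simp only [mem_iUnion, mem_singleton_iff] at hB
  obtain ⟨q, r, -, rfl⟩ := hB
  exact ⟨q, r, ha, hsub⟩

section InitialSegments

variable {κ : Cardinal} (x : {o : Ordinal // o < κ.ord} → ℝ)

def initSeg (α : {o : Ordinal // o < κ.ord}) : Set (range x) :=
  {p | ∃ ξ : {o : Ordinal // o < κ.ord}, (ξ : Ordinal) ≤ α ∧ (p : ℝ) = x ξ}

theorem initSeg_mono : Monotone (initSeg x) :=
  fun _ _ hαβ _ ⟨ξ, hξ, hp⟩ => ⟨ξ, hξ.trans hαβ, hp⟩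

theorem exists_mem_initSeg (p : range x) : ∃ α, p ∈ initSeg x α := by
  obtain ⟨_, ξ, rfl⟩ := p
  exact ⟨ξ, ξ, le_rfl, rfl⟩

theorem vTop_eq_generateFrom :
    vTop x = generateFrom ({s | IsOpen s} ∪ range (initSeg x)) := by
  unfold vTop
  congr 2
  · ext V
    exact (isOpen_induced_iff.trans (exists_congr fun U => and_congr_right' eq_comm)).symm
  · ext V
    exact exists_congr fun α => eq_comm

variable {x}

theorem exists_rat_Ioo_inter_initSeg_subset {W : Set (range x)} (hW : IsOpen[vTop x] W)
    {p : range x} (hp : p ∈ W) : ∃ q r : ℚ, (p : ℝ) ∈ Ioo (q : ℝ) r ∧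
      ∃ α, p ∈ initSeg x α ∧ Subtype.val ⁻¹' Ioo (q : ℝ) r ∩ initSeg x α ⊆ W := by
  rw [vTop_eq_generateFrom] at hW
  obtain ⟨U, hU, hpU, α, hpα, hUW⟩ := exists_inter_subset_of_isOpen_generateFrom _
    (initSeg_mono x) (exists_mem_initSeg x) hW hp
  obtain ⟨U', hU', rfl⟩ := isOpen_induced_iff.1 hU
  obtain ⟨q, r, hpqr, hqrU⟩ := Real.exists_rat_Ioo_subset_of_mem_nhds (hU'.mem_nhds hpU)
  exact ⟨q, r, hpqr, α, hpα, (inter_subset_inter_left _ (preimage_mono hqrU)).trans hUW⟩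

end InitialSegments

theorem stmt16_general (κ : Cardinal) (hcof : Cardinal.aleph0 < κ.ord.cof)
    (x : {o : Ordinal // o < κ.ord} → ℝ)
    (K : Set ↥(Set.range x)) :
    ∃ δ : {o : Ordinal // o < κ.ord},
      K ⊆ closure[vTop x] (K ∩ {p : ↥(Set.range x) |
        ∃ ξ : {o : Ordinal // o < κ.ord},
          (ξ : Ordinal) ≤ (δ : Ordinal) ∧ (p : ℝ) = x ξ}) := by
  have : Nonempty {o : Ordinal // o < κ.ord} :=
    ⟨⟨0, pos_iff_ne_zero.2 fun h => by simp [h] at hcof⟩⟩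
  obtain ⟨δ, hδ⟩ := exists_forall_exists_mem_le_of_bddAbove
    (Ordinal.bddAbove_range_of_countable hcof)
    fun I : ℚ × ℚ => {ξ | x ξ ∈ Ioo (I.1 : ℝ) I.2 ∧ ⟨x ξ, mem_range_self ξ⟩ ∈ K}
  refine ⟨δ, fun p hpK => @mem_closure_iff _ (vTop x) _ _ |>.2 fun W hW hpW => ?_⟩
  obtain ⟨q, r, hpqr, α, ⟨ξp, hξpα, hpξ⟩, hW⟩ := exists_rat_Ioo_inter_initSeg_subset hW hpW
  have hp : p = ⟨x ξp, mem_range_self ξp⟩ := Subtype.ext hpξ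
  obtain ⟨ξ, ⟨hξqr, hξK⟩, hξδ, hξξp⟩ := hδ (q, r) ξp ⟨hpξ ▸ hpqr, hp ▸ hpK⟩
  exact ⟨⟨x ξ, mem_range_self ξ⟩, hW ⟨hξqr, ξ, hξξp.trans hξpα, rfl⟩, hξK, ξ, hξδ, rfl⟩

/-- If `κ` has uncountable cofinality then in the space of Example 8 every
subset `K` has a subset of the form `K ∩ V_δ` which is dense in `K`. -/
theorem stmt16 (κ : Cardinal) (hcof : Cardinal.aleph0 < κ.ord.cof)
    (x : {o : Ordinal // o < κ.ord} → ℝ) (hx : Function.Injective x)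
    (K : Set ↥(Set.range x)) :
    ∃ δ : {o : Ordinal // o < κ.ord},
      K ⊆ closure[vTop x] (K ∩ {p : ↥(Set.range x) |
        ∃ ξ : {o : Ordinal // o < κ.ord},
          (ξ : Ordinal) ≤ (δ : Ordinal) ∧ (p : ℝ) = x ξ}) :=
  stmt16_general κ hcof x K
end

section
/- Assume there is a splitting family of subsets of ℕ of cardinality ℵ₁ (i.e., 𝔰 = ℵ₁). Let X be a regular Hausdorff space in which every sequence of subsets has a subsequence converging in the sense of Kuratowski. Then either X is hereditarily Lindelöf, or X contains an S-space, i.e., an uncountable subspace Y that is hereditarily separable (every subspace of Y is separable) but not Lindelöf. -/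
/-!
A non-Lindelöf subspace carries a right-separated `ω₁`-sequence (each point has a neighbourhood
missing all later points), and the range of such a sequence is not Lindelöf. If a subspace of
that range were not separable, it would carry a left-separated `ω₁`-sequence; since both are
injective, re-indexing along an uncountable set on which the two orders agree yields an
`ω₁`-sequence that is left- and right-separated, i.e. an uncountable discrete family. As
`𝔰 = ℵ₁`, such a family can be indexed by a splitting family `S`, and then the sets
`Kₙ = {points indexed by members of S containing n}` have no Kuratowski convergent subsequence.
-/

open Set Topology TopologicalSpace

open Cardinal Function

abbrev OmegaOne : Type := (ord ℵ₁).ToType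

namespace OmegaOne

lemma mk_eq : #OmegaOne = ℵ₁ := mk_ord_toType ℵ₁

instance : Uncountable OmegaOne := aleph0_lt_mk_iff.1 (mk_eq ▸ aleph0_lt_aleph_one)

lemma countable_Iio (a : OmegaOne) : (Iio a).Countable := by
  have := mk_Iio_lt a (by rw [mk_eq, Ordinal.type_toType])
  rwa [mk_eq, lt_aleph_one_iff, le_aleph0_iff_set_countable] at this

lemma exists_gt_of_countable {T : Set OmegaOne} (hT : T.Countable) : ∃ a, ∀ b ∈ T, b < a := by
  by_contra! h
  refine Set.not_countable_univ ((hT.biUnion fun b _ => (countable_Iio b).insert b).mono ?_)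
  intro a _
  obtain ⟨b, hbT, hab⟩ := h a
  exact mem_biUnion hbT (Iio_insert (a := b) ▸ hab)

/-- Transfinite recursion along `ω₁`: every initial segment of the sequence is countable. -/
lemma exists_seq {X : Type*} (P : Set X → X → Prop) (h : ∀ c : Set X, c.Countable → ∃ x, P c x) :
    ∃ f : OmegaOne → X, ∀ a, P (f '' Iio a) (f a) := by
  have : Nonempty X := let ⟨x, _⟩ := h ∅ countable_empty; ⟨x⟩
  let F (a : OmegaOne) (ih : ∀ b < a, X) : X :=
    Classical.epsilon (P (range fun b : Iio a => ih b b.2))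
  have wf : WellFounded (α := OmegaOne) (· < ·) := wellFounded_lt
  let f : OmegaOne → X := wf.fix F
  refine ⟨f, fun a => ?_⟩
  have hfa : f a = Classical.epsilon (P (f '' Iio a)) := by
    have : f a = F a fun b _ => f b := wf.fix_eq F a
    rw [this, image_eq_range]
  rw [hfa]
  exact Classical.epsilon_spec (h _ ((countable_Iio a).image f))

lemma exists_seq_mem {X : Type*} (Z : Set X) (P : Set X → X → Prop)
    (h : ∀ c ⊆ Z, c.Countable → ∃ x ∈ Z, P c x) :
    ∃ f : OmegaOne → X, ∀ a, f a ∈ Z ∧ P (f '' Iio a) (f a) := by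
  obtain ⟨z, hz, -⟩ := h ∅ (empty_subset Z) countable_empty
  obtain ⟨f, hf⟩ := exists_seq (fun c x => x ∈ Z ∧ (c ⊆ Z → P c x)) fun c hc => by
    by_cases hcZ : c ⊆ Z
    · obtain ⟨x, hx, hP⟩ := h c hcZ hc
      exact ⟨x, hx, fun _ => hP⟩
    · exact ⟨z, hz, fun h' => (hcZ h').elim⟩
  exact ⟨f, fun a => ⟨(hf a).1, (hf a).2 (image_subset_iff.2 fun b _ => (hf b).1)⟩⟩

lemma exists_strictMono_comp_strictMono {β : OmegaOne → OmegaOne} (hβ : Injective β) :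
    ∃ f : OmegaOne → OmegaOne, StrictMono f ∧ StrictMono (β ∘ f) := by
  obtain ⟨f, hf⟩ := exists_seq (fun c d => ∀ b ∈ c, b < d ∧ β b < β d) fun c hc => by
    obtain ⟨a, ha⟩ := exists_gt_of_countable (hc.image β)
    obtain ⟨d, hd⟩ := exists_gt_of_countable (hc.union ((countable_Iio a).preimage hβ))
    have hβd : a ≤ β d := not_lt.1 fun h => lt_irrefl d (hd d (Or.inr h))
    exact ⟨d, fun b hb => ⟨hd b (Or.inl hb), (ha _ (mem_image_of_mem β hb)).trans_le hβd⟩⟩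
  exact ⟨f, fun b a hba => (hf a (f b) (mem_image_of_mem f hba)).1,
    fun b a hba => (hf a (f b) (mem_image_of_mem f hba)).2⟩

end OmegaOne

section Separated

variable {ι X : Type*} [TopologicalSpace X]

def IsLeftSeparated [Preorder ι] (x : ι → X) : Prop :=
  ∀ a, x a ∉ closure (x '' Iio a)

def IsRightSeparated [Preorder ι] (x : ι → X) : Prop :=
  ∀ a, x a ∉ closure (x '' Ioi a)

lemma IsLeftSeparated.comp_strictMono [Preorder ι] {κ : Type*} [Preorder κ] {x : ι → X}
    (hx : IsLeftSeparated x) {f : κ → ι} (hf : StrictMono f) : IsLeftSeparated (x ∘ f) :=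
  fun a h => hx (f a) <| closure_mono (by
    rw [image_comp]; exact image_mono (image_subset_iff.2 fun _ hb => hf hb)) h

lemma IsRightSeparated.comp_strictMono [Preorder ι] {κ : Type*} [Preorder κ] {x : ι → X}
    (hx : IsRightSeparated x) {f : κ → ι} (hf : StrictMono f) : IsRightSeparated (x ∘ f) :=
  fun a h => hx (f a) <| closure_mono (by
    rw [image_comp]; exact image_mono (image_subset_iff.2 fun _ hb => hf hb)) h

lemma IsLeftSeparated.injective [LinearOrder ι] {x : ι → X} (hx : IsLeftSeparated x) :
    Injective x := by
  refine Injective.of_lt_imp_ne fun a b hab h => hx b ?_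
  exact h ▸ subset_closure (mem_image_of_mem x hab)

end Separated

section Lindelof

variable {X : Type*} [TopologicalSpace X]

lemma exists_open_cover_of_not_isLindelof {Y : Set X} (hY : ¬ IsLindelof Y) :
    ∃ V : X → Set X, (∀ x, IsOpen (V x)) ∧ (∀ x ∈ Y, x ∈ V x) ∧
      ∀ c ⊆ Y, c.Countable → ¬ Y ⊆ ⋃ x ∈ c, V x := by
  contrapose! hY
  refine isLindelof_of_countable_subcover fun U hUo hYU => ?_
  choose i hi using fun x (hx : x ∈ Y) => mem_iUnion.1 (hYU hx)
  obtain ⟨c, hcY, hc, hYc⟩ := hY (fun x => ⋃ hx : x ∈ Y, U (i x hx))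
    (fun x => isOpen_iUnion fun _ => hUo _) (fun x hx => mem_iUnion.2 ⟨hx, hi x hx⟩)
  have : Countable c := hc.to_subtype
  refine ⟨range fun x : c => i x (hcY x.2), countable_range _, fun z hz => ?_⟩
  obtain ⟨x, hxc, hzx⟩ := mem_iUnion₂.1 (hYc hz)
  exact mem_iUnion₂.2 ⟨_, ⟨⟨x, hxc⟩, rfl⟩, mem_iUnion.1 hzx |>.choose_spec⟩

lemma exists_isRightSeparated_of_not_isLindelof {Y : Set X} (hY : ¬ IsLindelof Y) :
    ∃ y : OmegaOne → X, range y ⊆ Y ∧ IsRightSeparated y := by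
  obtain ⟨V, hVo, hYV, hV⟩ := exists_open_cover_of_not_isLindelof hY
  obtain ⟨y, hy⟩ := OmegaOne.exists_seq_mem Y (fun c x => x ∉ ⋃ z ∈ c, V z) fun c hcY hc =>
    not_subset.1 (hV c hcY hc)
  refine ⟨y, range_subset_iff.2 fun a => (hy a).1, fun a ha => ?_⟩
  obtain ⟨_, hb, b, hab, rfl⟩ := mem_closure_iff.1 ha (V (y a)) (hVo _) (hYV _ (hy a).1)
  exact (hy b).2 (mem_biUnion (mem_image_of_mem y hab) hb)

lemma IsRightSeparated.not_isLindelof_range {y : OmegaOne → X} (hy : IsRightSeparated y) :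
    ¬ IsLindelof (range y) := by
  intro hL
  obtain ⟨r, hr, hcov⟩ := hL.elim_countable_subcover (fun a => (closure (y '' Ioi a))ᶜ)
    (fun _ => isClosed_closure.isOpen_compl)
    (range_subset_iff.2 fun a => mem_iUnion.2 ⟨a, hy a⟩)
  obtain ⟨a, ha⟩ := OmegaOne.exists_gt_of_countable hr
  obtain ⟨b, hbr, hb⟩ := mem_iUnion₂.1 (hcov (mem_range_self a))
  exact hb (subset_closure (mem_image_of_mem y (ha b hbr)))

lemma exists_isLeftSeparated_of_forall_not_subset_closure {Z : Set X}
    (hZ : ∀ c ⊆ Z, c.Countable → ¬ Z ⊆ closure c) :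
    ∃ z : OmegaOne → X, range z ⊆ Z ∧ IsLeftSeparated z := by
  obtain ⟨z, hz⟩ := OmegaOne.exists_seq_mem Z (fun c x => x ∉ closure c) fun c hcZ hc =>
    not_subset.1 (hZ c hcZ hc)
  exact ⟨z, range_subset_iff.2 fun a => (hz a).1, fun a => (hz a).2⟩

end Lindelof

section Discrete

variable {ι X : Type*} [t : TopologicalSpace X]

def IsDiscreteFamily (x : ι → X) : Prop :=
  ∀ i, x i ∉ closure (x '' {i}ᶜ)

lemma IsDiscreteFamily.comp_injective {κ : Type*} {x : ι → X} (hx : IsDiscreteFamily x)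
    {e : κ → ι} (he : Injective e) : IsDiscreteFamily (x ∘ e) := by
  intro k h
  refine hx (e k) (closure_mono ?_ h)
  rw [image_comp]
  exact image_mono (by rintro _ ⟨j, hj, rfl⟩ hjk; exact hj (he hjk))

lemma IsLeftSeparated.isDiscreteFamily [LinearOrder ι] {x : ι → X}
    (hl : IsLeftSeparated x) (hr : IsRightSeparated x) : IsDiscreteFamily x := by
  intro a
  rw [← Iio_union_Ioi, image_union, closure_union, mem_union, not_or]
  exact ⟨hl a, hr a⟩

/-- With `K n` the points indexed by the members of `S` containing `n`, the point indexed by a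
member splitting `A` lies in the upper limit but, being isolated, not in the lower one. -/
lemma IsSplittingFamily.not_isDiscreteFamily {S : Set (Set ℕ)} (hS : IsSplittingFamily S)
    (hGBW : ∀ K : ℕ → Set X, ∃ A : Set ℕ, A.Infinite ∧ kurLi t K A = kurLs t K A)
    (p : S → X) : ¬ IsDiscreteFamily p := by
  intro hp
  obtain ⟨A, hA, hLiLs⟩ := hGBW fun n => p '' {s | n ∈ (s : Set ℕ)}
  obtain ⟨s, hsS, hAs, hAs'⟩ := hS A hA
  have hLs : p ⟨s, hsS⟩ ∈ kurLs t (fun n => p '' {s | n ∈ (s : Set ℕ)}) A := by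
    intro U _ hU
    refine hAs.mono ?_
    rintro n ⟨hnA, hns⟩
    exact ⟨hnA, p ⟨s, hsS⟩, hU, ⟨s, hsS⟩, hns, rfl⟩
  rw [← hLiLs] at hLs
  refine hAs' ((hLs _ isClosed_closure.isOpen_compl (hp _)).subset fun n ⟨hnA, hns⟩ => ⟨hnA, ?_⟩)
  rw [eq_empty_iff_forall_notMem]
  rintro _ ⟨hx, σ, hnσ, rfl⟩
  refine hx (subset_closure (mem_image_of_mem p fun h => hns ?_))
  subst h
  exact hnσ

lemma IsLeftSeparated.not_isRightSeparated {S : Set (Set ℕ)} (hS : IsSplittingFamily S)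
    (hcard : #S ≤ ℵ₁)
    (hGBW : ∀ K : ℕ → Set X, ∃ A : Set ℕ, A.Infinite ∧ kurLi t K A = kurLs t K A)
    {x : OmegaOne → X} (hl : IsLeftSeparated x) : ¬ IsRightSeparated x := by
  intro hr
  obtain ⟨e⟩ : Nonempty (S ↪ OmegaOne) := by
    rw [← le_def, OmegaOne.mk_eq]
    exact hcard
  exact hS.not_isDiscreteFamily hGBW _ ((hl.isDiscreteFamily hr).comp_injective e.injective)

end Discrete

theorem stmt19_general {X : Type*} [t : TopologicalSpace X]
    (hs : ∃ S : Set (Set ℕ), IsSplittingFamily S ∧ Cardinal.mk S = Cardinal.aleph 1)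
    (hGBW : ∀ K : ℕ → Set X, ∃ A : Set ℕ, A.Infinite ∧ kurLi t K A = kurLs t K A) :
    (∀ Y : Set X, IsLindelof Y) ∨
      ∃ Y : Set X, ¬ Y.Countable ∧
        (∀ Z : Set X, Z ⊆ Y → ∃ c : Set X, c ⊆ Z ∧ c.Countable ∧ Z ⊆ closure c) ∧
        ¬ IsLindelof Y := by
  obtain ⟨S, hS, hcard⟩ := hs
  refine or_iff_not_imp_left.2 fun hL => ?_
  obtain ⟨Y, hY⟩ := not_forall.1 hL
  obtain ⟨y, -, hy⟩ := exists_isRightSeparated_of_not_isLindelof hY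
  refine ⟨range y, fun h => hy.not_isLindelof_range h.isLindelof, fun Z hZ => ?_,
    hy.not_isLindelof_range⟩
  by_contra! hZsep
  obtain ⟨z, hzZ, hz⟩ := exists_isLeftSeparated_of_forall_not_subset_closure hZsep
  choose β hβ using fun a => hZ (hzZ (mem_range_self a))
  have hyβ : y ∘ β = z := funext hβ
  obtain ⟨f, hf, hβf⟩ :=
    OmegaOne.exists_strictMono_comp_strictMono (Injective.of_comp (hyβ ▸ hz.injective))
  refine (hz.comp_strictMono hf).not_isRightSeparated hS hcard.le hGBW ?_
  rw [← hyβ]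
  exact hy.comp_strictMono hβf

/-- Assume `𝔰 = ℵ₁`, i.e. there is a splitting family of cardinality `ℵ₁`.
A regular Hausdorff space with the generalized Bolzano–Weierstrass property
is either hereditarily Lindelöf or contains an S-space: an uncountable
hereditarily separable non-Lindelöf subspace. -/
theorem stmt19 {X : Type*} [t : TopologicalSpace X] [T3Space X]
    (hs : ∃ S : Set (Set ℕ), IsSplittingFamily S ∧ Cardinal.mk S = Cardinal.aleph 1)
    (hGBW : ∀ K : ℕ → Set X, ∃ A : Set ℕ, A.Infinite ∧ kurLi t K A = kurLs t K A) :
    (∀ Y : Set X, IsLindelof Y) ∨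
      ∃ Y : Set X, ¬ Y.Countable ∧
        (∀ Z : Set X, Z ⊆ Y → ∃ c : Set X, c ⊆ Z ∧ c.Countable ∧ Z ⊆ closure c) ∧
        ¬ IsLindelof Y :=
  stmt19_general (t := t) hs hGBW
end
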